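/- Let p be an odd prime, 1 ≤ d ≤ n ≤ m, and let R be a nearring with identity i whose additive group (R,+) is isomorphic to G(p^m, p^n, p^d). Then there exist elements b, c ∈ R such that, writing a = i: a has additive order p^m, b has additive order p^n, c has additive order p^d, −b+a+b = a+c, −a+c+a = c, −b+c+b = c, and the additive group of R is generated by {a, b, c}. -/

import Mathlib

/-- The carrier of the group `G(p^m, p^n, p^d)`: the set
`ZMod (p^m) × ZMod (p^n) × ZMod (p^d)`. -/
def GCar (p m n d : ℕ) : Type :=
  ZMod (p ^ m) × ZMod (p ^ n) × ZMod (p ^ d)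

/-- The multiplication of the group `G(p^m, p^n, p^d)`:
`(x1,x2,x3)·(y1,y2,y3) = (x1+y1, x2+y2, x3+y3 − x̄2·ȳ1)`,
where the bars denote reduction modulo `p^d`. -/
def Gmul (p m n d : ℕ) (x y : GCar p m n d) : GCar p m n d :=
  (x.1 + y.1, x.2.1 + y.2.1,
    x.2.2 + y.2.2 - (ZMod.cast x.2.1 : ZMod (p ^ d)) * (ZMod.cast y.1 : ZMod (p ^ d)))

set_option linter.unnecessarySeqFocus false in
/-- The group `G(p^m, p^n, p^d)` (for `d ≤ n ≤ m`). The elements `a = (1,0,0)`,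
`b = (0,1,0)`, `c = (0,0,1)` satisfy the defining relations
`a^(p^m) = b^(p^n) = c^(p^d) = 1`, `b⁻¹ab = ac`, `a⁻¹ca = b⁻¹cb = c`,
and every element of the group is uniquely of the form `a^(x1) b^(x2) c^(x3)`. -/
def Ggroup (p m n d : ℕ) (hdn : d ≤ n) (hdm : d ≤ m) : Group (GCar p m n d) where
  mul := Gmul p m n d
  one := ((0, 0, 0) : ZMod (p ^ m) × ZMod (p ^ n) × ZMod (p ^ d))
  inv x := ((-x.1, -x.2.1,
    -x.2.2 - (ZMod.cast x.2.1 : ZMod (p ^ d)) * (ZMod.cast x.1 : ZMod (p ^ d))) :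
      ZMod (p ^ m) × ZMod (p ^ n) × ZMod (p ^ d))
  mul_assoc x y z := by
    have h1 : (p : ℕ) ^ d ∣ p ^ n := pow_dvd_pow p hdn
    have h2 : (p : ℕ) ^ d ∣ p ^ m := pow_dvd_pow p hdm
    show Gmul p m n d (Gmul p m n d x y) z = Gmul p m n d x (Gmul p m n d y z)
    refine Prod.ext ?_ (Prod.ext ?_ ?_) <;>
      simp [Gmul, ZMod.cast_add h1, ZMod.cast_add h2] <;> ring
  one_mul x := by
    show Gmul p m n d ((0, 0, 0) : ZMod (p ^ m) × ZMod (p ^ n) × ZMod (p ^ d)) x = x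
    refine Prod.ext ?_ (Prod.ext ?_ ?_) <;> simp [Gmul, ZMod.cast_zero]
  mul_one x := by
    show Gmul p m n d x ((0, 0, 0) : ZMod (p ^ m) × ZMod (p ^ n) × ZMod (p ^ d)) = x
    refine Prod.ext ?_ (Prod.ext ?_ ?_) <;> simp [Gmul, ZMod.cast_zero]
  inv_mul_cancel x := by
    have h1 : (p : ℕ) ^ d ∣ p ^ n := pow_dvd_pow p hdn
    have h2 : (p : ℕ) ^ d ∣ p ^ m := pow_dvd_pow p hdm
    show Gmul p m n d _ x = ((0, 0, 0) : ZMod (p ^ m) × ZMod (p ^ n) × ZMod (p ^ d))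
    refine Prod.ext ?_ (Prod.ext ?_ ?_) <;>
      simp [Gmul, ZMod.cast_neg h1, ZMod.cast_neg h2] <;> ring

/-- A (left) nearring with (multiplicative) identity: `(R,+)` is a (not necessarily
abelian) group with neutral element `0`, `(R,·)` is a monoid (so with identity
element `i = 1`), and the left distributive law `x·(y+z) = x·y + x·z` holds. -/
class LeftNearring (R : Type*) extends AddGroup R, Monoid R where
  left_distrib : ∀ x y z : R, x * (y + z) = x * y + x * z


section Aux

variable {p m n d : ℕ}

lemma Godd_pow_dvd_choose_two {q : ℕ} (hq : Odd q) : q ∣ q.choose 2 := by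
  rw [Nat.choose_two_right]
  obtain ⟨r, hr⟩ := hq
  have h2 : 2 ∣ q - 1 := by omega
  rw [Nat.mul_div_assoc q h2]
  exact Dvd.intro _ rfl

lemma Gmul_def (hdn : d ≤ n) (hdm : d ≤ m) :
    letI : Group (GCar p m n d) := Ggroup p m n d hdn hdm
    ∀ x y : GCar p m n d, x * y = Gmul p m n d x y := fun _ _ => rfl

lemma Gone_def (hdn : d ≤ n) (hdm : d ≤ m) :
    letI : Group (GCar p m n d) := Ggroup p m n d hdn hdm
    (1 : GCar p m n d) = ((0, 0, 0) : ZMod (p ^ m) × ZMod (p ^ n) × ZMod (p ^ d)) := rfl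

lemma Ginv_def (hdn : d ≤ n) (hdm : d ≤ m) :
    letI : Group (GCar p m n d) := Ggroup p m n d hdn hdm
    ∀ x : GCar p m n d, x⁻¹ = ((-x.1, -x.2.1,
      -x.2.2 - (ZMod.cast x.2.1 : ZMod (p ^ d)) * (ZMod.cast x.1 : ZMod (p ^ d))) :
      ZMod (p ^ m) × ZMod (p ^ n) × ZMod (p ^ d)) := fun _ => rfl

lemma Gpow (hdn : d ≤ n) (hdm : d ≤ m) :
    letI : Group (GCar p m n d) := Ggroup p m n d hdn hdm
    ∀ (x : GCar p m n d) (k : ℕ),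
    x ^ k = (((k : ZMod (p ^ m)) * x.1, (k : ZMod (p ^ n)) * x.2.1,
      (k : ZMod (p ^ d)) * x.2.2 -
        (k.choose 2 : ZMod (p ^ d)) * (ZMod.cast x.2.1 : ZMod (p ^ d)) *
          (ZMod.cast x.1 : ZMod (p ^ d))) :
      ZMod (p ^ m) × ZMod (p ^ n) × ZMod (p ^ d)) := by
  letI : Group (GCar p m n d) := Ggroup p m n d hdn hdm
  have h1 : (p : ℕ) ^ d ∣ p ^ n := pow_dvd_pow p hdn
  have h2 : (p : ℕ) ^ d ∣ p ^ m := pow_dvd_pow p hdm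
  intro x k
  induction k with
  | zero =>
    rw [pow_zero, Gone_def hdn hdm]
    refine Prod.ext ?_ (Prod.ext ?_ ?_) <;> simp
  | succ k ih =>
    rw [pow_succ, ih]
    erw [Gmul_def hdn hdm]
    have hch : (k + 1).choose 2 = k.choose 2 + k := by
      rw [Nat.choose_succ_succ]
      simp [Nat.choose_one_right, Nat.add_comm]
    refine Prod.ext ?_ (Prod.ext ?_ ?_) <;>
      simp [Gmul, hch, ZMod.cast_mul h1, ZMod.cast_natCast h1, Nat.cast_add] <;> ring

end Aux


lemma zmod_isUnit_iff {p : ℕ} (hp : p.Prime) {k : ℕ} (hk : 0 < k) (x : ZMod (p ^ k)) :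
    IsUnit x ↔ ¬ p ∣ x.val := by
  haveI : NeZero (p ^ k) := ⟨pow_ne_zero k hp.ne_zero⟩
  conv_lhs => rw [← ZMod.natCast_zmod_val x]
  rw [ZMod.isUnit_iff_coprime, Nat.coprime_pow_right_iff hk, Nat.coprime_comm]
  exact hp.coprime_iff_not_dvd

section NR
variable {R : Type*} [LeftNearring R]

lemma LN_mul_zero (x : R) : x * 0 = 0 := by
  have h := LeftNearring.left_distrib x 0 0
  rw [add_zero] at h
  exact (left_eq_add.mp h)

lemma LN_mul_neg (x y : R) : x * (-y) = -(x * y) := by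
  have h := LeftNearring.left_distrib x y (-y)
  rw [add_neg_cancel, LN_mul_zero] at h
  exact (neg_eq_of_add_eq_zero_right h.symm).symm

lemma LN_mul_nsmul (x y : R) (k : ℕ) : x * (k • y) = k • (x * y) := by
  induction k with
  | zero => simp [LN_mul_zero]
  | succ k ih => rw [succ_nsmul, succ_nsmul, LeftNearring.left_distrib, ih]

end NR

/-- Let `R` be a nearring with identity `i = 1` whose additive group is isomorphic to
`G(p^m, p^n, p^d)` (`p` an odd prime, `1 ≤ d ≤ n ≤ m`). Then there are `b, c ∈ R`
such that (with `a = i = 1`): `a`, `b`, `c` have additive orders `p^m`, `p^n`, `p^d`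
respectively, `-b+a+b = a+c`, `-a+c+a = c`, `-b+c+b = c`, and `a`, `b`, `c` generate
the additive group of `R`. -/
theorem exists_additive_generators (p m n d : ℕ) (hp : p.Prime) (hodd : Odd p)
    (hd : 1 ≤ d) (hdn : d ≤ n) (hnm : n ≤ m) (R : Type*) [LeftNearring R] :
    letI : Group (GCar p m n d) := Ggroup p m n d hdn (hdn.trans hnm)
    Nonempty (Multiplicative R ≃* GCar p m n d) →
      ∃ b c : R,
        addOrderOf (1 : R) = p ^ m ∧ addOrderOf b = p ^ n ∧ addOrderOf c = p ^ d ∧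
        -b + 1 + b = 1 + c ∧ -(1 : R) + c + 1 = c ∧ -b + c + b = c ∧
        AddSubgroup.closure {(1 : R), b, c} = ⊤ := by
  letI : Group (GCar p m n d) := Ggroup p m n d hdn (hdn.trans hnm)
  rintro ⟨φ⟩
  have hdm : d ≤ m := hdn.trans hnm
  have h1dvd : (p:ℕ)^d ∣ p^n := pow_dvd_pow p hdn
  have h2dvd : (p:ℕ)^d ∣ p^m := pow_dvd_pow p hdm
  have hndvd : (p:ℕ)^n ∣ p^m := pow_dvd_pow p hnm
  haveI : NeZero (p^m) := ⟨pow_ne_zero m hp.ne_zero⟩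
  haveI : NeZero (p^n) := ⟨pow_ne_zero n hp.ne_zero⟩
  haveI : NeZero (p^d) := ⟨pow_ne_zero d hp.ne_zero⟩
  set F : R → GCar p m n d := fun r => φ (Multiplicative.ofAdd r) with hFdef
  have hFinj : Function.Injective F := fun x y h => Multiplicative.ofAdd.injective (φ.injective h)
  have hF0 : F 0 = 1 := map_one φ
  have hFadd : ∀ x y : R, F (x + y) = F x * F y := fun x y => map_mul φ _ _
  have hFneg : ∀ x : R, F (-x) = (F x)⁻¹ := fun x => map_inv φ _
  have hFpow : ∀ (x : R) (k : ℕ), F (k • x) = (F x) ^ k := fun x k => by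
    show φ (Multiplicative.ofAdd (k • x)) = _
    rw [ofAdd_nsmul, map_pow]
  set E : GCar p m n d → R := fun g => Multiplicative.toAdd (φ.symm g) with hEdef
  have hFE : ∀ g, F (E g) = g := fun g => by simp [hFdef, hEdef]
  have hGmul : ∀ x y : GCar p m n d, x * y = Gmul p m n d x y := Gmul_def hdn hdm
  have hGone : (1 : GCar p m n d) = ((0, 0, 0) : ZMod (p ^ m) × ZMod (p ^ n) × ZMod (p ^ d)) :=
    Gone_def hdn hdm
  have hGinv : ∀ x : GCar p m n d, x⁻¹ = ((-x.1, -x.2.1,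
      -x.2.2 - (ZMod.cast x.2.1 : ZMod (p ^ d)) * (ZMod.cast x.1 : ZMod (p ^ d))) :
      ZMod (p ^ m) × ZMod (p ^ n) × ZMod (p ^ d)) := Ginv_def hdn hdm
  have hGpow : ∀ (x : GCar p m n d) (k : ℕ),
      x ^ k = (((k : ZMod (p ^ m)) * x.1, (k : ZMod (p ^ n)) * x.2.1,
      (k : ZMod (p ^ d)) * x.2.2 -
        (k.choose 2 : ZMod (p ^ d)) * (ZMod.cast x.2.1 : ZMod (p ^ d)) *
          (ZMod.cast x.1 : ZMod (p ^ d))) :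
      ZMod (p ^ m) × ZMod (p ^ n) × ZMod (p ^ d)) := Gpow hdn hdm
  set a : GCar p m n d := F 1 with ha
  have hchoose : ∀ j : ℕ, d ≤ j → (((p^j).choose 2 : ℕ) : ZMod (p^d)) = 0 := fun j hj => by
    rw [ZMod.natCast_eq_zero_iff]
    exact dvd_trans (pow_dvd_pow p hj) (Godd_pow_dvd_choose_two hodd.pow)
  -- every element has order dividing p^m
  have hxm : ∀ x : GCar p m n d, x ^ (p ^ m) = 1 := fun x => by
    rw [hGpow x _, hGone]
    have e1 : ((p^m : ℕ) : ZMod (p^m)) = 0 := ZMod.natCast_self _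
    have e2 : ((p^m : ℕ) : ZMod (p^n)) = 0 := (ZMod.natCast_eq_zero_iff _ _).mpr hndvd
    have e3 : ((p^m : ℕ) : ZMod (p^d)) = 0 := (ZMod.natCast_eq_zero_iff _ _).mpr h2dvd
    have e4 := hchoose m hdm
    refine Prod.ext ?_ (Prod.ext ?_ ?_) <;> simp [e1, e2, e3, e4]
  set g₀ : GCar p m n d := ((1 : ZMod (p^m)), 0, 0) with hg₀
  -- the additive order of 1 is p^m
  have hord1 : addOrderOf (1 : R) = p ^ m := by
    refine Nat.dvd_antisymm ?_ ?_
    · apply addOrderOf_dvd_of_nsmul_eq_zero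
      apply hFinj
      rw [hFpow, hF0, hxm]
    · have he : ∀ x : R, addOrderOf (1 : R) • x = 0 := fun x => by
        have h := LN_mul_nsmul x (1:R) (addOrderOf (1:R))
        rw [mul_one] at h
        rw [← h, addOrderOf_nsmul_eq_zero, LN_mul_zero]
      have h1 := congrArg F (he (E g₀))
      rw [hFpow, hFE, hF0, hGpow, hGone] at h1
      have h2 := congrArg (fun z : ZMod (p ^ m) × ZMod (p ^ n) × ZMod (p ^ d) => z.1) h1
      simp only [hg₀, mul_one] at h2
      exact (ZMod.natCast_eq_zero_iff _ _).mp h2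
  -- order-transfer helper
  have ordE : ∀ (g : GCar p m n d) (N : ℕ),
      (∀ k : ℕ, g ^ k = 1 ↔ N ∣ k) → addOrderOf (E g) = N := by
    intro g N hg
    refine Nat.dvd_antisymm ?_ ?_
    · apply addOrderOf_dvd_of_nsmul_eq_zero
      apply hFinj
      rw [hFpow, hFE, hF0]
      exact (hg N).mpr dvd_rfl
    · refine (hg (addOrderOf (E g))).mp ?_
      have h : g ^ addOrderOf (E g) = F (addOrderOf (E g) • E g) := by rw [hFpow, hFE]
      rw [h, addOrderOf_nsmul_eq_zero, hF0]
  -- conjugation-transfer helper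
  have conjR : ∀ (x y z : R), (F x)⁻¹ * F y * F x = F z → -x + y + x = z := by
    intro x y z h
    apply hFinj
    rw [hFadd, hFadd, hFneg]
    exact h
  -- generation-transfer helper
  have genR : ∀ (B C : GCar p m n d),
      (∀ g : GCar p m n d, ∃ e j k : ℕ, g = a ^ e * B ^ j * C ^ k) →
      AddSubgroup.closure {(1:R), E B, E C} = ⊤ := by
    intro B C hgen
    rw [eq_top_iff]
    rintro w -
    obtain ⟨e, j, k, hg⟩ := hgen (F w)
    have hw : w = e • (1:R) + (j • E B + k • E C) := by
      apply hFinj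
      rw [hFadd, hFadd, hFpow, hFpow, hFpow, hFE, hFE, ← ha, ← mul_assoc]
      exact hg
    rw [hw]
    refine AddSubgroup.add_mem _
      (AddSubgroup.nsmul_mem _ (AddSubgroup.subset_closure (by left; rfl)) e)
      (AddSubgroup.add_mem _
        (AddSubgroup.nsmul_mem _ (AddSubgroup.subset_closure (by right; left; rfl)) j)
        (AddSubgroup.nsmul_mem _ (AddSubgroup.subset_closure (by right; right; rfl)) k))
  -- key dichotomy: a.1 or a.2.1 is a unit
  have hkey : IsUnit a.1 ∨ IsUnit a.2.1 := by
    by_contra hcon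
    push_neg at hcon
    obtain ⟨hu, hs⟩ := hcon
    have hu' : p ∣ a.1.val := by
      by_contra h; exact hu ((zmod_isUnit_iff hp (hd.trans (hdn.trans hnm)) a.1).mpr h)
    have hs' : p ∣ a.2.1.val := by
      by_contra h; exact hs ((zmod_isUnit_iff hp (hd.trans hdn) a.2.1).mpr h)
    obtain ⟨α, hα⟩ := hu'
    obtain ⟨β, hβ⟩ := hs'
    set A : GCar p m n d := ((α : ZMod (p^m)), (β : ZMod (p^n)), 0) with hA
    have hA1 : (A ^ p).1 = a.1 := by
      rw [hGpow A p]
      show (p : ZMod (p^m)) * (α : ZMod (p^m)) = a.1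
      rw [← Nat.cast_mul, ← hα, ZMod.natCast_zmod_val]
    have hA2 : (A ^ p).2.1 = a.2.1 := by
      rw [hGpow A p]
      show (p : ZMod (p^n)) * (β : ZMod (p^n)) = a.2.1
      rw [← Nat.cast_mul, ← hβ, ZMod.natCast_zmod_val]
    set δ : ZMod (p^d) := a.2.2 - (A ^ p).2.2 with hδ
    set X : GCar p m n d := ((δ.val : ZMod (p^m)), 0, 0) with hX
    set Y : GCar p m n d := (0, (1 : ZMod (p^n)), 0) with hY
    have hcomm : X⁻¹ * (Y⁻¹ * (X * Y)) =
        (((0 : ZMod (p^m)), (0 : ZMod (p^n)), δ) : GCar p m n d) := by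
      rw [hGinv X, hGinv Y, hGmul X Y]
      erw [hGmul, hGmul]
      refine Prod.ext ?_ (Prod.ext ?_ ?_) <;>
        simp [hX, hY, Gmul, ZMod.cast_add h1dvd, ZMod.cast_add h2dvd, ZMod.cast_neg h1dvd,
          ZMod.cast_neg h2dvd, ZMod.cast_natCast h2dvd, ZMod.natCast_zmod_val,
          ZMod.cast_one h1dvd, -ZMod.natCast_val] <;> ring
    have hdecomp : a = A ^ p * (X⁻¹ * (Y⁻¹ * (X * Y))) := by
      rw [hcomm]
      erw [hGmul]
      refine Prod.ext ?_ (Prod.ext ?_ ?_) <;>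
        simp [Gmul, hA1, hA2, hδ] <;> ring
    have hRdecomp : (1 : R) = p • (E A) + (-(E X) + (-(E Y) + (E X + E Y))) := by
      apply hFinj
      simp only [hFadd, hFneg, hFpow, hFE]
      rw [← ha]
      exact hdecomp
    have hall : (E g₀ : R) = p • (E g₀ * E A) +
        (-(E g₀ * E X) + (-(E g₀ * E Y) + (E g₀ * E X + E g₀ * E Y))) := by
      conv_lhs => rw [← mul_one (E g₀), hRdecomp]
      simp only [LeftNearring.left_distrib, LN_mul_nsmul, LN_mul_neg]
    have h3 := congrArg F hall
    simp only [hFadd, hFneg, hFpow, hFE] at h3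
    rw [hGpow (F (E g₀ * E A)) p] at h3
    rw [hGinv (F (E g₀ * E X)), hGinv (F (E g₀ * E Y))] at h3
    erw [hGmul, hGmul, hGmul, hGmul] at h3
    have h4 := congrArg (fun z : ZMod (p ^ m) × ZMod (p ^ n) × ZMod (p ^ d) => z.1) h3
    simp only [hg₀, Gmul] at h4
    have h5 : (1 : ZMod (p^m)) = (p : ZMod (p^m)) * (F (E g₀ * E A)).1 := by
      linear_combination h4
    have hunit : IsUnit ((p : ℕ) : ZMod (p^m)) := IsUnit.of_mul_eq_one _ h5.symm
    rw [ZMod.isUnit_iff_coprime] at hunit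
    have hp1 : p = 1 := Nat.Coprime.eq_one_of_dvd hunit
      (dvd_pow_self p (by omega : m ≠ 0))
    exact absurd hp1 (by have := hp.one_lt; omega)
  -- the generic tail for generation
  have genTail : ∀ (B C : GCar p m n d) (γ : ZMod (p^d)) (w : (ZMod (p^d))ˣ), (↑w = γ) →
      C = (((0 : ZMod (p^m)), (0 : ZMod (p^n)), γ) : ZMod (p^m) × ZMod (p^n) × ZMod (p^d)) →
      (∀ g : GCar p m n d, ∃ e j : ℕ,
        (a ^ e * B ^ j).1 = g.1 ∧ (a ^ e * B ^ j).2.1 = g.2.1) →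
      ∀ g : GCar p m n d, ∃ e j k : ℕ, g = a ^ e * B ^ j * C ^ k := by
    intro B C γ w hwγ hCdef hfill g
    obtain ⟨e, j, hh1, hh2⟩ := hfill g
    set h : GCar p m n d := a ^ e * B ^ j with hhdef
    set δ' : ZMod (p^d) := (h⁻¹ * g).2.2 with hδ'
    refine ⟨e, j, (δ' * ↑w⁻¹).val, ?_⟩
    have hCk : C ^ ((δ' * ↑w⁻¹).val) = h⁻¹ * g := by
      rw [hGpow C _, hGinv h]
      erw [hGmul]
      refine Prod.ext ?_ (Prod.ext ?_ ?_)
      · simp [Gmul, hCdef, hh1]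
      · simp [Gmul, hCdef, hh2]
      · show (((δ' * ↑w⁻¹).val : ZMod (p^d))) * C.2.2 - _ = _
        rw [hCdef, ZMod.natCast_zmod_val]
        show δ' * ↑w⁻¹ * γ - _ * ZMod.cast (0 : ZMod (p^n)) * ZMod.cast (0 : ZMod (p^m)) = _
        simp only [ZMod.cast_zero, mul_zero, sub_zero]
        rw [← hwγ, mul_assoc, Units.inv_mul, mul_one, hδ', hGinv h]
        erw [hGmul]
    rw [hCk, hhdef, mul_inv_cancel_left]
  by_cases hu : IsUnit a.1
  · -- Case A : the first coordinate of a is a unit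
    set γ : ZMod (p^d) := (ZMod.cast a.1 : ZMod (p^d)) with hγdef
    have hγ : IsUnit γ := by
      have h := hu.map (ZMod.castHom h2dvd (ZMod (p^d)))
      rwa [ZMod.castHom_apply] at h
    obtain ⟨w, hw⟩ := hγ
    obtain ⟨v, hv⟩ := hu
    set B : GCar p m n d := ((0 : ZMod (p^m)), (1 : ZMod (p^n)), (0 : ZMod (p^d))) with hB
    set C : GCar p m n d := ((0 : ZMod (p^m)), (0 : ZMod (p^n)), γ) with hC
    refine ⟨E B, E C, hord1, ?_, ?_, ?_, ?_, ?_, ?_⟩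
    · refine ordE B (p^n) ?_
      intro k
      rw [hGpow B k, hGone]
      constructor
      · intro hk
        have h2 := congrArg (fun z : ZMod (p ^ m) × ZMod (p ^ n) × ZMod (p ^ d) => z.2.1) hk
        simp only [hB, mul_one] at h2
        exact (ZMod.natCast_eq_zero_iff _ _).mp h2
      · intro hk
        have h0 : (k : ZMod (p^n)) = 0 := (ZMod.natCast_eq_zero_iff _ _).mpr hk
        refine Prod.ext ?_ (Prod.ext ?_ ?_) <;> simp [hB, h0]
    · refine ordE C (p^d) ?_
      intro k
      rw [hGpow C k, hGone]
      constructor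
      · intro hk
        have h2 := congrArg (fun z : ZMod (p ^ m) × ZMod (p ^ n) × ZMod (p ^ d) => z.2.2) hk
        simp only [hC, ZMod.cast_zero, mul_zero, zero_mul, sub_zero] at h2
        have h3 : (k : ZMod (p^d)) = 0 := by
          have h4 := congrArg (fun z => z * (↑w⁻¹ : ZMod (p^d))) h2
          simpa [← hw, mul_assoc] using h4
        exact (ZMod.natCast_eq_zero_iff _ _).mp h3
      · intro hk
        have h0 : (k : ZMod (p^d)) = 0 := (ZMod.natCast_eq_zero_iff _ _).mpr hk
        refine Prod.ext ?_ (Prod.ext ?_ ?_) <;> simp [hC, h0]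
    · refine conjR (E B) 1 (1 + E C) ?_
      rw [hFadd, hFE, hFE, ← ha, hGinv B]
      erw [hGmul, hGmul, hGmul]
      refine Prod.ext ?_ (Prod.ext ?_ ?_) <;>
        simp [hB, hC, Gmul, ZMod.cast_add h1dvd, ZMod.cast_neg h1dvd,
          ZMod.cast_one h1dvd, -ZMod.natCast_val] <;> ring
    · refine conjR 1 (E C) (E C) ?_
      rw [hFE, ← ha, hGinv a]
      erw [hGmul, hGmul]
      refine Prod.ext ?_ (Prod.ext ?_ ?_) <;>
        simp [hC, Gmul, ZMod.cast_add h1dvd, ZMod.cast_neg h1dvd, -ZMod.natCast_val] <;> ring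
    · refine conjR (E B) (E C) (E C) ?_
      rw [hFE, hFE, hGinv B]
      erw [hGmul, hGmul]
      refine Prod.ext ?_ (Prod.ext ?_ ?_) <;>
        simp [hB, hC, Gmul, ZMod.cast_add h1dvd, ZMod.cast_neg h1dvd,
          ZMod.cast_one h1dvd, -ZMod.natCast_val] <;> ring
    · refine genR B C (genTail B C γ w hw hC ?_)
      intro g
      refine ⟨(g.1 * ↑v⁻¹).val,
        (g.2.1 - (((g.1 * ↑v⁻¹).val : ℕ) : ZMod (p^n)) * a.2.1).val, ?_, ?_⟩
      · rw [hGmul, hGpow, hGpow]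
        simp only [Gmul, hB, mul_zero, add_zero]
        rw [ZMod.natCast_zmod_val, ← hv, mul_assoc, Units.inv_mul, mul_one]
      · rw [hGmul, hGpow, hGpow]
        simp only [Gmul, hB, mul_one]
        rw [ZMod.natCast_zmod_val]
        ring
  · -- Case B : the second coordinate of a is a unit, and n = m
    have hs : IsUnit a.2.1 := hkey.resolve_left hu
    have hpu : p ∣ a.1.val := by
      by_contra h; exact hu ((zmod_isUnit_iff hp (hd.trans (hdn.trans hnm)) a.1).mpr h)
    have hmn : n = m := by
      by_contra hne
      have hlt : n < m := lt_of_le_of_ne hnm hne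
      have hone : a ^ (p ^ (m-1)) = 1 := by
        rw [hGpow a _, hGone]
        obtain ⟨α, hα⟩ := hpu
        have e1 : ((p^(m-1) : ℕ) : ZMod (p^m)) * a.1 = 0 := by
          rw [← ZMod.natCast_zmod_val a.1, hα, ← Nat.cast_mul,
            show p^(m-1)*(p*α) = p^m * α by
              rw [← mul_assoc, ← pow_succ]
              congr 2
              omega]
          rw [Nat.cast_mul, ZMod.natCast_self, zero_mul]
        have e2 : ((p^(m-1) : ℕ) : ZMod (p^n)) = 0 :=
          (ZMod.natCast_eq_zero_iff _ _).mpr (pow_dvd_pow p (by omega))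
        have e3 : ((p^(m-1) : ℕ) : ZMod (p^d)) = 0 :=
          (ZMod.natCast_eq_zero_iff _ _).mpr (pow_dvd_pow p (by omega))
        have e4 := hchoose (m-1) (by omega)
        push_cast at e1 e2 e3
        refine Prod.ext ?_ (Prod.ext ?_ ?_) <;> simp [e1, e2, e3, e4]
      have hz : (p^(m-1)) • (1 : R) = 0 := by
        apply hFinj
        rw [hFpow, hF0, ← ha, hone]
      have hdvd := addOrderOf_dvd_of_nsmul_eq_zero hz
      rw [hord1] at hdvd
      have := (Nat.pow_dvd_pow_iff_le_right hp.one_lt).mp hdvd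
      omega
    subst hmn
    set γ : ZMod (p^d) := -(ZMod.cast a.2.1 : ZMod (p^d)) with hγdef
    have hγ : IsUnit γ := by
      have h := (hs.map (ZMod.castHom h1dvd (ZMod (p^d)))).neg
      rwa [ZMod.castHom_apply] at h
    obtain ⟨w, hw⟩ := hγ
    obtain ⟨v, hv⟩ := hs
    set B : GCar p n n d := ((1 : ZMod (p^n)), (0 : ZMod (p^n)), (0 : ZMod (p^d))) with hB
    set C : GCar p n n d := ((0 : ZMod (p^n)), (0 : ZMod (p^n)), γ) with hC
    refine ⟨E B, E C, hord1, ?_, ?_, ?_, ?_, ?_, ?_⟩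
    · refine ordE B (p^n) ?_
      intro k
      rw [hGpow B k, hGone]
      constructor
      · intro hk
        have h2 := congrArg (fun z : ZMod (p ^ n) × ZMod (p ^ n) × ZMod (p ^ d) => z.1) hk
        simp only [hB, mul_one] at h2
        exact (ZMod.natCast_eq_zero_iff _ _).mp h2
      · intro hk
        have h0 : (k : ZMod (p^n)) = 0 := (ZMod.natCast_eq_zero_iff _ _).mpr hk
        refine Prod.ext ?_ (Prod.ext ?_ ?_) <;> simp [hB, h0]
    · refine ordE C (p^d) ?_
      intro k
      rw [hGpow C k, hGone]
      constructor
      · intro hk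
        have h2 := congrArg (fun z : ZMod (p ^ n) × ZMod (p ^ n) × ZMod (p ^ d) => z.2.2) hk
        simp only [hC, ZMod.cast_zero, mul_zero, zero_mul, sub_zero] at h2
        have h3 : (k : ZMod (p^d)) = 0 := by
          have h4 := congrArg (fun z => z * (↑w⁻¹ : ZMod (p^d))) h2
          simpa [← hw, mul_assoc] using h4
        exact (ZMod.natCast_eq_zero_iff _ _).mp h3
      · intro hk
        have h0 : (k : ZMod (p^d)) = 0 := (ZMod.natCast_eq_zero_iff _ _).mpr hk
        refine Prod.ext ?_ (Prod.ext ?_ ?_) <;> simp [hC, h0]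
    · refine conjR (E B) 1 (1 + E C) ?_
      rw [hFadd, hFE, hFE, ← ha, hGinv B]
      erw [hGmul, hGmul, hGmul]
      refine Prod.ext ?_ (Prod.ext ?_ ?_) <;>
        simp [hB, hC, Gmul, ZMod.cast_add h1dvd, ZMod.cast_neg h1dvd,
          ZMod.cast_one h2dvd, -ZMod.natCast_val] <;> ring
    · refine conjR 1 (E C) (E C) ?_
      rw [hFE, ← ha, hGinv a]
      erw [hGmul, hGmul]
      refine Prod.ext ?_ (Prod.ext ?_ ?_) <;>
        simp [hC, Gmul, ZMod.cast_add h1dvd, ZMod.cast_neg h1dvd, -ZMod.natCast_val] <;> ring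
    · refine conjR (E B) (E C) (E C) ?_
      rw [hFE, hFE, hGinv B]
      erw [hGmul, hGmul]
      refine Prod.ext ?_ (Prod.ext ?_ ?_) <;>
        simp [hB, hC, Gmul, ZMod.cast_add h1dvd, ZMod.cast_neg h1dvd,
          ZMod.cast_one h2dvd, -ZMod.natCast_val] <;> ring
    · refine genR B C (genTail B C γ w hw hC ?_)
      intro g
      refine ⟨(g.2.1 * ↑v⁻¹).val,
        (g.1 - (((g.2.1 * ↑v⁻¹).val : ℕ) : ZMod (p^n)) * a.1).val, ?_, ?_⟩
      · rw [hGmul, hGpow, hGpow]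
        simp only [Gmul, hB, mul_one]
        rw [ZMod.natCast_zmod_val, ZMod.natCast_zmod_val]
        ring
      · rw [hGmul, hGpow, hGpow]
        simp only [Gmul, hB, mul_zero, add_zero]
        rw [ZMod.natCast_zmod_val, ← hv, mul_assoc, Units.inv_mul, mul_one]
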